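/- arXiv:1903.04012 — 2 statements merged into one kernel-verified Lean document; each statement's English description precedes it below -/
import Mathlib

section
/- Every finite concept class C over a finite domain satisfies NCTD(C) ≥ ⌈(1/2)·deg_avg(C)⌉. -/
open Finset

variable {X : Type*} [DecidableEq X]

/-- A sample set `S` is consistent with concept `C`. -/
def Consistent (C : Finset X) (S : Finset (X × Bool)) : Prop :=
  ∀ p ∈ S, (p.1 ∈ C ↔ p.2 = true)

/-- `T` is a teacher mapping for the class `𝒞`. -/
def IsTeacher (𝒞 : Finset (Finset X)) (T : Finset X → Finset (X × Bool)) : Prop :=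
  ∀ C ∈ 𝒞, Consistent C (T C)

/-- `T` is non-clashing on `𝒞`. -/
def NonClashing (𝒞 : Finset (Finset X)) (T : Finset X → Finset (X × Bool)) : Prop :=
  ∀ C ∈ 𝒞, ∀ C' ∈ 𝒞, C ≠ C' → ¬ (Consistent C' (T C) ∧ Consistent C (T C'))

/-- The no-clash teaching dimension. -/
noncomputable def NCTD (𝒞 : Finset (Finset X)) : ℕ :=
  sInf {d | ∃ T : Finset X → Finset (X × Bool),
    IsTeacher 𝒞 T ∧ NonClashing 𝒞 T ∧ ∀ C ∈ 𝒞, (T C).card ≤ d}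

/-- `T` is a positive teacher mapping for `𝒞` (positive examples only). -/
def IsPosTeacher (𝒞 : Finset (Finset X)) (T : Finset X → Finset X) : Prop :=
  ∀ C ∈ 𝒞, T C ⊆ C

/-- A positive teacher mapping is non-clashing on `𝒞`. -/
def PosNonClashing (𝒞 : Finset (Finset X)) (T : Finset X → Finset X) : Prop :=
  ∀ C ∈ 𝒞, ∀ C' ∈ 𝒞, C ≠ C' → ¬ (T C ⊆ C' ∧ T C' ⊆ C)

/-- The positive no-clash teaching dimension. -/
noncomputable def NCTDplus (𝒞 : Finset (Finset X)) : ℕ :=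
  sInf {d | ∃ T : Finset X → Finset X,
    IsPosTeacher 𝒞 T ∧ PosNonClashing 𝒞 T ∧ ∀ C ∈ 𝒞, (T C).card ≤ d}

/-- The average no-clash teaching dimension (real-valued). -/
noncomputable def ANCTD (𝒞 : Finset (Finset X)) : ℝ :=
  sInf {q : ℝ | ∃ T : Finset X → Finset (X × Bool),
    IsTeacher 𝒞 T ∧ NonClashing 𝒞 T ∧
      q = (∑ C ∈ 𝒞, ((T C).card : ℝ)) / 𝒞.card}

/-- The number of neighbors of `C` in `𝒞` (concepts at symmetric difference one). -/
def degIn (𝒞 : Finset (Finset X)) (C : Finset X) : ℕ :=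
  (𝒞.filter (fun C' => ((C \ C') ∪ (C' \ C)).card = 1)).card

/-- The average degree of `𝒞`. -/
noncomputable def degAvg (𝒞 : Finset (Finset X)) : ℝ :=
  (∑ C ∈ 𝒞, (degIn 𝒞 C : ℝ)) / 𝒞.card

/-!
If two concepts differ only on `x`, a non-clashing teacher labels `x` in one of their two
teaching sets. Charge each edge of the one-inclusion graph to such an endpoint `C`: the edges
charged to `C` lead to the concepts `C ∆ {x}` with `x` labelled by `T C`, so there are at most
`|T C|` of them. Hence the degrees sum to at most `2 ∑ |T C| ≤ 2 |𝒞| NCTD(𝒞)`.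
-/

open scoped symmDiff

lemma Consistent.of_forall_notMem_symmDiff {C C' : Finset X} {S : Finset (X × Bool)}
    (h : Consistent C S) (hS : ∀ p ∈ S, p.1 ∉ C ∆ C') : Consistent C' S := by
  intro p hp
  have hp' := hS p hp
  rw [mem_symmDiff] at hp'
  rw [← h p hp]
  tauto

/-- If neither teaching set labels `x`, each is consistent with both concepts: a clash. -/
lemma NonClashing.mem_or_mem_of_symmDiff_eq_singleton {𝒞 : Finset (Finset X)}
    {T : Finset X → Finset (X × Bool)} (hT : IsTeacher 𝒞 T)
    (hNC : NonClashing 𝒞 T) {C C' : Finset X} (hC : C ∈ 𝒞) (hC' : C' ∈ 𝒞) {x : X}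
    (hx : C ∆ C' = {x}) : x ∈ (T C).image Prod.fst ∨ x ∈ (T C').image Prod.fst := by
  by_contra! hlab
  have hne : C ≠ C' := by
    rintro rfl
    simp at hx
  have hunlabelled : ∀ D, x ∉ (T D).image Prod.fst → ∀ p ∈ T D, p.1 ∉ C ∆ C' := by
    rintro D hD p hp hpx
    rw [hx, mem_singleton] at hpx
    exact hD (mem_image.2 ⟨p, hp, hpx⟩)
  refine hNC C hC C' hC' hne ⟨(hT C hC).of_forall_notMem_symmDiff (hunlabelled C hlab.1), ?_⟩
  refine (hT C' hC').of_forall_notMem_symmDiff ?_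
  rw [symmDiff_comm]
  exact hunlabelled C' hlab.2

lemma card_filter_symmDiff_mem_le (𝒞 𝒮 : Finset (Finset X)) (C : Finset X) :
    (𝒞.filter fun C' => C ∆ C' ∈ 𝒮).card ≤ 𝒮.card :=
  card_le_card_of_injOn (C ∆ ·) (fun _ hC' => (mem_filter.1 hC').2)
    (fun _ _ _ _ h => symmDiff_right_injective C h)

lemma sum_degIn_le_two_mul_sum_card_filter (𝒞 : Finset (Finset X))
    (R : Finset X → Finset X → Prop) [DecidableRel R]
    (hR : ∀ C ∈ 𝒞, ∀ C' ∈ 𝒞, (C ∆ C').card = 1 → R C C' ∨ R C' C) :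
    ∑ C ∈ 𝒞, degIn 𝒞 C ≤ 2 * ∑ C ∈ 𝒞, (𝒞.filter (R C)).card := by
  have hdeg : ∀ C ∈ 𝒞, degIn 𝒞 C ≤ (𝒞.filter (R C)).card + (𝒞.filter (R · C)).card := by
    intro C hC
    refine (card_le_card ?_).trans (card_union_le _ _)
    intro C' hC'
    obtain ⟨hC'𝒞, hneighbor⟩ := mem_filter.1 hC'
    rw [← filter_or]
    exact mem_filter.2 ⟨hC'𝒞, hR C hC C' hC'𝒞 hneighbor⟩
  have hswap : ∑ C ∈ 𝒞, (𝒞.filter (R · C)).card = ∑ C ∈ 𝒞, (𝒞.filter (R C)).card :=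
    (sum_card_bipartiteAbove_eq_sum_card_bipartiteBelow (r := R)).symm
  calc ∑ C ∈ 𝒞, degIn 𝒞 C
      ≤ ∑ C ∈ 𝒞, ((𝒞.filter (R C)).card + (𝒞.filter (R · C)).card) := sum_le_sum hdeg
    _ = 2 * ∑ C ∈ 𝒞, (𝒞.filter (R C)).card := by rw [sum_add_distrib, hswap, two_mul]

lemma sum_degIn_le_two_mul_sum_card {𝒞 : Finset (Finset X)} {T : Finset X → Finset (X × Bool)}
    (hT : IsTeacher 𝒞 T) (hNC : NonClashing 𝒞 T) :
    ∑ C ∈ 𝒞, degIn 𝒞 C ≤ 2 * ∑ C ∈ 𝒞, (T C).card := by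
  let labelled (C : Finset X) := ((T C).image Prod.fst).powersetCard 1
  have horient : ∀ C ∈ 𝒞, ∀ C' ∈ 𝒞, (C ∆ C').card = 1 →
      C ∆ C' ∈ labelled C ∨ C' ∆ C ∈ labelled C' := by
    intro C hC C' hC' h1
    obtain ⟨x, hx⟩ := card_eq_one.1 h1
    simp only [labelled, mem_powersetCard, symmDiff_comm C' C, hx, singleton_subset_iff,
      card_singleton, and_true]
    exact hNC.mem_or_mem_of_symmDiff_eq_singleton hT hC hC' hx
  have hout : ∀ C, (𝒞.filter fun C' => C ∆ C' ∈ labelled C).card ≤ (T C).card := fun C =>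
    calc (𝒞.filter fun C' => C ∆ C' ∈ labelled C).card
        ≤ ((T C).image Prod.fst).card := by
          simpa [labelled] using card_filter_symmDiff_mem_le 𝒞 (labelled C) C
      _ ≤ (T C).card := card_image_le
  calc ∑ C ∈ 𝒞, degIn 𝒞 C
      ≤ 2 * ∑ C ∈ 𝒞, (𝒞.filter fun C' => C ∆ C' ∈ labelled C).card :=
        sum_degIn_le_two_mul_sum_card_filter 𝒞 (fun C C' => C ∆ C' ∈ labelled C) horient
    _ ≤ 2 * ∑ C ∈ 𝒞, (T C).card := Nat.mul_le_mul_left 2 (sum_le_sum fun C _ => hout C)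

/-- The infimum defining `NCTD` is attained (not the junk value of `sInf ∅`): labelling every
instance that occurs in a concept of `𝒞` is a non-clashing teacher. -/
lemma exists_teacher_card_le_NCTD (𝒞 : Finset (Finset X)) :
    ∃ T, IsTeacher 𝒞 T ∧ NonClashing 𝒞 T ∧ ∀ C ∈ 𝒞, (T C).card ≤ NCTD 𝒞 := by
  refine Nat.sInf_mem (s := {d | ∃ T : Finset X → Finset (X × Bool),
    IsTeacher 𝒞 T ∧ NonClashing 𝒞 T ∧ ∀ C ∈ 𝒞, (T C).card ≤ d}) ?_
  let U := 𝒞.sup id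
  refine ⟨U.card, fun C => U.image fun x => (x, decide (x ∈ C)), ?_, ?_, fun C _ => card_image_le⟩
  · intro C _ p hp
    obtain ⟨x, _, rfl⟩ := mem_image.1 hp
    simp
  · rintro C hC C' hC' hne ⟨hcons, -⟩
    obtain ⟨x, hx⟩ := symmDiff_nonempty.2 hne
    have hxU : x ∈ U := by
      rcases mem_union.1 (symmDiff_subset_union hx) with h | h
      · exact mem_sup.2 ⟨C, hC, h⟩
      · exact mem_sup.2 ⟨C', hC', h⟩
    have := hcons _ (mem_image_of_mem _ hxU)
    rw [mem_symmDiff] at hx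
    simp only [decide_eq_true_eq] at this
    tauto

theorem NCTD_ge_ceil_half_degAvg_general {X : Type*} [DecidableEq X]
    (𝒞 : Finset (Finset X)) :
    ⌈degAvg 𝒞 / 2⌉ ≤ (NCTD 𝒞 : ℤ) := by
  obtain ⟨T, hT, hNC, hcard⟩ := exists_teacher_card_le_NCTD 𝒞
  have hsum : ∑ C ∈ 𝒞, degIn 𝒞 C ≤ 2 * NCTD 𝒞 * 𝒞.card :=
    calc ∑ C ∈ 𝒞, degIn 𝒞 C ≤ 2 * ∑ C ∈ 𝒞, (T C).card := sum_degIn_le_two_mul_sum_card hT hNC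
      _ ≤ 2 * ∑ _C ∈ 𝒞, NCTD 𝒞 := Nat.mul_le_mul_left 2 (sum_le_sum hcard)
      _ = 2 * NCTD 𝒞 * 𝒞.card := by rw [sum_const, smul_eq_mul]; ring
  have hdeg : degAvg 𝒞 ≤ 2 * NCTD 𝒞 := by
    unfold degAvg
    exact div_le_of_le_mul₀ (by positivity) (by positivity) (by exact_mod_cast hsum)
  rw [Int.ceil_le]
  push_cast
  linarith

/-- `NCTD(𝒞) ≥ ⌈deg_avg(𝒞) / 2⌉`. -/
theorem NCTD_ge_ceil_half_degAvg {X : Type*} [DecidableEq X] [Fintype X]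
    (𝒞 : Finset (Finset X)) (h𝒞 : 𝒞.Nonempty) :
    ⌈degAvg 𝒞 / 2⌉ ≤ (NCTD 𝒞 : ℤ) :=
  NCTD_ge_ceil_half_degAvg_general 𝒞
end

section
/- For finite concept classes C₁ and C₂ over disjoint finite domains, ANCTD(C₁ ⊔ C₂) = ANCTD(C₁) + ANCTD(C₂), where ANCTD is the average no-clash teaching dimension and ⊔ is the free combination. -/
open Finset

variable {X : Type*} [DecidableEq X]

variable {X₁ X₂ : Type*} [DecidableEq X₁] [DecidableEq X₂]

/-- The free combination of two concept classes over disjoint domains. -/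
def FreeComb (𝒞₁ : Finset (Finset X₁)) (𝒞₂ : Finset (Finset X₂)) :
    Finset (Finset (X₁ ⊕ X₂)) :=
  (𝒞₁ ×ˢ 𝒞₂).image (fun p => p.1.image Sum.inl ∪ p.2.image Sum.inr)

/-!
Non-clashing teachers `T₁` for `𝒞₁` and `T₂` for `𝒞₂` combine, by taking disjoint unions of
teaching sets, into a non-clashing teacher for `𝒞₁ ⊔ 𝒞₂` whose average size is the sum of the two
averages. Conversely, a non-clashing teacher `T` for `𝒞₁ ⊔ 𝒞₂` restricts, for each fixed `C₂`, to
the non-clashing teacher `C₁ ↦ T (C₁ ∪ C₂) ∩ (X₁ × Bool)` for `𝒞₁`, and symmetrically; since every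
teaching set is the disjoint union of its two restrictions, averaging over `𝒞₁ × 𝒞₂` bounds the
average size of `T` below by `ANCTD 𝒞₁ + ANCTD 𝒞₂`.
-/

open scoped BigOperators

lemma freeComb_eq_image_sumEquiv_symm (𝒞₁ : Finset (Finset X₁)) (𝒞₂ : Finset (Finset X₂)) :
    FreeComb 𝒞₁ 𝒞₂ = (𝒞₁ ×ˢ 𝒞₂).image sumEquiv.symm := by
  unfold FreeComb
  congr 1
  funext p
  ext (x | x) <;> simp

lemma mem_freeComb {𝒞₁ : Finset (Finset X₁)} {𝒞₂ : Finset (Finset X₂)} {C : Finset (X₁ ⊕ X₂)} :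
    C ∈ FreeComb 𝒞₁ 𝒞₂ ↔ C.toLeft ∈ 𝒞₁ ∧ C.toRight ∈ 𝒞₂ := by
  simp [freeComb_eq_image_sumEquiv_symm, disjSum_eq_iff]

@[simp]
lemma disjSum_mem_freeComb {𝒞₁ : Finset (Finset X₁)} {𝒞₂ : Finset (Finset X₂)} {C₁ : Finset X₁}
    {C₂ : Finset X₂} : C₁.disjSum C₂ ∈ FreeComb 𝒞₁ 𝒞₂ ↔ C₁ ∈ 𝒞₁ ∧ C₂ ∈ 𝒞₂ := by
  simp [mem_freeComb]

lemma expect_freeComb {M : Type*} [AddCommMonoid M] [Module ℚ≥0 M]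
    (𝒞₁ : Finset (Finset X₁)) (𝒞₂ : Finset (Finset X₂)) (f : Finset (X₁ ⊕ X₂) → M) :
    𝔼 C ∈ FreeComb 𝒞₁ 𝒞₂, f C = 𝔼 C₁ ∈ 𝒞₁, 𝔼 C₂ ∈ 𝒞₂, f (C₁.disjSum C₂) := by
  rw [freeComb_eq_image_sumEquiv_symm, expect_image sumEquiv.symm.injective.injOn,
    expect_product]
  rfl

section Sample

variable {α β : Type*}

def leftSample (S : Finset ((α ⊕ β) × Bool)) : Finset (α × Bool) :=
  (S.map (Equiv.sumProdDistrib α β Bool).toEmbedding).toLeft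

def rightSample (S : Finset ((α ⊕ β) × Bool)) : Finset (β × Bool) :=
  (S.map (Equiv.sumProdDistrib α β Bool).toEmbedding).toRight

def sampleDisjSum (S₁ : Finset (α × Bool)) (S₂ : Finset (β × Bool)) :
    Finset ((α ⊕ β) × Bool) :=
  (S₁.disjSum S₂).map (Equiv.sumProdDistrib α β Bool).symm.toEmbedding

@[simp]
lemma mem_leftSample {S : Finset ((α ⊕ β) × Bool)} {x : α} {b : Bool} :
    (x, b) ∈ leftSample S ↔ (Sum.inl x, b) ∈ S := by
  simp [leftSample]

@[simp]
lemma mem_rightSample {S : Finset ((α ⊕ β) × Bool)} {x : β} {b : Bool} :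
    (x, b) ∈ rightSample S ↔ (Sum.inr x, b) ∈ S := by
  simp [rightSample]

@[simp]
lemma leftSample_sampleDisjSum (S₁ : Finset (α × Bool)) (S₂ : Finset (β × Bool)) :
    leftSample (sampleDisjSum S₁ S₂) = S₁ := by
  simp [leftSample, sampleDisjSum, map_map]

@[simp]
lemma rightSample_sampleDisjSum (S₁ : Finset (α × Bool)) (S₂ : Finset (β × Bool)) :
    rightSample (sampleDisjSum S₁ S₂) = S₂ := by
  simp [rightSample, sampleDisjSum, map_map]

lemma card_sampleDisjSum (S₁ : Finset (α × Bool)) (S₂ : Finset (β × Bool)) :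
    #(sampleDisjSum S₁ S₂) = #S₁ + #S₂ := by
  simp [sampleDisjSum]

lemma card_leftSample_add_card_rightSample (S : Finset ((α ⊕ β) × Bool)) :
    #(leftSample S) + #(rightSample S) = #S := by
  rw [leftSample, rightSample, card_toLeft_add_card_toRight, card_map]

lemma consistent_iff_leftSample_rightSample {C : Finset (α ⊕ β)}
    {S : Finset ((α ⊕ β) × Bool)} :
    Consistent C S ↔ Consistent C.toLeft (leftSample S) ∧ Consistent C.toRight (rightSample S) := by
  simp [Consistent, Sum.forall]

def combTeacher (T₁ : Finset α → Finset (α × Bool))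
    (T₂ : Finset β → Finset (β × Bool)) (C : Finset (α ⊕ β)) : Finset ((α ⊕ β) × Bool) :=
  sampleDisjSum (T₁ C.toLeft) (T₂ C.toRight)

lemma consistent_combTeacher {T₁ : Finset α → Finset (α × Bool)}
    {T₂ : Finset β → Finset (β × Bool)} {C D : Finset (α ⊕ β)} :
    Consistent D (combTeacher T₁ T₂ C) ↔
      Consistent D.toLeft (T₁ C.toLeft) ∧ Consistent D.toRight (T₂ C.toRight) := by
  simp [combTeacher, consistent_iff_leftSample_rightSample]

end Sample

section Teaching

variable {α : Type*} {𝒞 : Finset (Finset α)}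

def supportTeacher [DecidableEq α] (𝒞 : Finset (Finset α)) (C : Finset α) :
    Finset (α × Bool) :=
  (𝒞.sup id).image fun x => (x, decide (x ∈ C))

lemma isTeacher_supportTeacher [DecidableEq α] : IsTeacher 𝒞 (supportTeacher 𝒞) := by
  intro C _ p hp
  obtain ⟨x, -, rfl⟩ := mem_image.1 hp
  simp

lemma nonClashing_supportTeacher [DecidableEq α] : NonClashing 𝒞 (supportTeacher 𝒞) := by
  rintro C hC C' hC' hne ⟨h, -⟩
  refine hne (ext fun x => ?_)
  by_cases hx : x ∈ 𝒞.sup id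
  · simpa [supportTeacher] using (h _ (mem_image_of_mem _ hx)).symm
  · exact iff_of_false (fun h => hx (le_sup (f := id) hC h))
      (fun h => hx (le_sup (f := id) hC' h))

lemma ANCTD_eq_sInf_expect (𝒞 : Finset (Finset α)) :
    ANCTD 𝒞 = sInf {q : ℝ | ∃ T, IsTeacher 𝒞 T ∧ NonClashing 𝒞 T ∧
      q = 𝔼 C ∈ 𝒞, (#(T C) : ℝ)} := by
  simp only [ANCTD, expect_eq_sum_div_card]

lemma ANCTD_le_expect {T : Finset α → Finset (α × Bool)} (hT : IsTeacher 𝒞 T)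
    (hN : NonClashing 𝒞 T) : ANCTD 𝒞 ≤ 𝔼 C ∈ 𝒞, (#(T C) : ℝ) := by
  rw [ANCTD_eq_sInf_expect]
  exact csInf_le ⟨0, by rintro _ ⟨T, -, -, rfl⟩; positivity⟩ ⟨T, hT, hN, rfl⟩

lemma le_ANCTD [DecidableEq α] {q : ℝ}
    (h : ∀ T, IsTeacher 𝒞 T → NonClashing 𝒞 T → q ≤ 𝔼 C ∈ 𝒞, (#(T C) : ℝ)) :
    q ≤ ANCTD 𝒞 := by
  rw [ANCTD_eq_sInf_expect]
  exact le_csInf ⟨_, _, isTeacher_supportTeacher, nonClashing_supportTeacher, rfl⟩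
    (by rintro _ ⟨T, hT, hN, rfl⟩; exact h T hT hN)

end Teaching

section FreeComb

variable {𝒞₁ : Finset (Finset X₁)} {𝒞₂ : Finset (Finset X₂)}

lemma isTeacher_combTeacher {T₁ : Finset X₁ → Finset (X₁ × Bool)}
    {T₂ : Finset X₂ → Finset (X₂ × Bool)} (hT₁ : IsTeacher 𝒞₁ T₁) (hT₂ : IsTeacher 𝒞₂ T₂) :
    IsTeacher (FreeComb 𝒞₁ 𝒞₂) (combTeacher T₁ T₂) := fun _ hC =>
  consistent_combTeacher.2 ⟨hT₁ _ (mem_freeComb.1 hC).1, hT₂ _ (mem_freeComb.1 hC).2⟩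

lemma nonClashing_combTeacher {T₁ : Finset X₁ → Finset (X₁ × Bool)}
    {T₂ : Finset X₂ → Finset (X₂ × Bool)} (hN₁ : NonClashing 𝒞₁ T₁) (hN₂ : NonClashing 𝒞₂ T₂) :
    NonClashing (FreeComb 𝒞₁ 𝒞₂) (combTeacher T₁ T₂) := by
  rintro C hC C' hC' hne ⟨hCC', hC'C⟩
  rw [mem_freeComb] at hC hC'
  rw [consistent_combTeacher] at hCC' hC'C
  by_cases hl : C.toLeft = C'.toLeft
  · have hr : C.toRight ≠ C'.toRight := fun hr => hne <| by
      rw [← toLeft_disjSum_toRight (u := C), hl, hr, toLeft_disjSum_toRight]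
    exact hN₂ _ hC.2 _ hC'.2 hr ⟨hCC'.2, hC'C.2⟩
  · exact hN₁ _ hC.1 _ hC'.1 hl ⟨hCC'.1, hC'C.1⟩

lemma ANCTD_freeComb_le_expect_add (h₁ : 𝒞₁.Nonempty) (h₂ : 𝒞₂.Nonempty)
    {T₁ : Finset X₁ → Finset (X₁ × Bool)} {T₂ : Finset X₂ → Finset (X₂ × Bool)}
    (hT₁ : IsTeacher 𝒞₁ T₁) (hN₁ : NonClashing 𝒞₁ T₁)
    (hT₂ : IsTeacher 𝒞₂ T₂) (hN₂ : NonClashing 𝒞₂ T₂) :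
    ANCTD (FreeComb 𝒞₁ 𝒞₂) ≤ 𝔼 C ∈ 𝒞₁, (#(T₁ C) : ℝ) + 𝔼 C ∈ 𝒞₂, (#(T₂ C) : ℝ) :=
  calc ANCTD (FreeComb 𝒞₁ 𝒞₂)
      ≤ 𝔼 C ∈ FreeComb 𝒞₁ 𝒞₂, (#(combTeacher T₁ T₂ C) : ℝ) :=
        ANCTD_le_expect (isTeacher_combTeacher hT₁ hT₂) (nonClashing_combTeacher hN₁ hN₂)
    _ = _ := by
        simp [expect_freeComb, combTeacher, card_sampleDisjSum, expect_add_distrib,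
          expect_const h₁, expect_const h₂]

lemma ANCTD_freeComb_le (h₁ : 𝒞₁.Nonempty) (h₂ : 𝒞₂.Nonempty) :
    ANCTD (FreeComb 𝒞₁ 𝒞₂) ≤ ANCTD 𝒞₁ + ANCTD 𝒞₂ := by
  rw [← sub_le_iff_le_add]
  refine le_ANCTD fun T₁ hT₁ hN₁ => ?_
  rw [sub_le_comm]
  refine le_ANCTD fun T₂ hT₂ hN₂ => ?_
  linarith [ANCTD_freeComb_le_expect_add h₁ h₂ hT₁ hN₁ hT₂ hN₂]

variable {T : Finset (X₁ ⊕ X₂) → Finset ((X₁ ⊕ X₂) × Bool)}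

lemma consistent_disjSum_iff_leftSample (hT : IsTeacher (FreeComb 𝒞₁ 𝒞₂) T)
    {C₁ D₁ : Finset X₁} {C₂ : Finset X₂} (hC₁ : C₁ ∈ 𝒞₁) (hC₂ : C₂ ∈ 𝒞₂) :
    Consistent (D₁.disjSum C₂) (T (C₁.disjSum C₂)) ↔
      Consistent D₁ (leftSample (T (C₁.disjSum C₂))) := by
  have := consistent_iff_leftSample_rightSample.1 (hT _ (disjSum_mem_freeComb.2 ⟨hC₁, hC₂⟩))
  simp_all [consistent_iff_leftSample_rightSample]

lemma consistent_disjSum_iff_rightSample (hT : IsTeacher (FreeComb 𝒞₁ 𝒞₂) T)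
    {C₁ : Finset X₁} {C₂ D₂ : Finset X₂} (hC₁ : C₁ ∈ 𝒞₁) (hC₂ : C₂ ∈ 𝒞₂) :
    Consistent (C₁.disjSum D₂) (T (C₁.disjSum C₂)) ↔
      Consistent D₂ (rightSample (T (C₁.disjSum C₂))) := by
  have := consistent_iff_leftSample_rightSample.1 (hT _ (disjSum_mem_freeComb.2 ⟨hC₁, hC₂⟩))
  simp_all [consistent_iff_leftSample_rightSample]

lemma ANCTD_le_expect_leftSample (hT : IsTeacher (FreeComb 𝒞₁ 𝒞₂) T)
    (hN : NonClashing (FreeComb 𝒞₁ 𝒞₂) T) {C₂ : Finset X₂} (hC₂ : C₂ ∈ 𝒞₂) :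
    ANCTD 𝒞₁ ≤ 𝔼 C₁ ∈ 𝒞₁, (#(leftSample (T (C₁.disjSum C₂))) : ℝ) := by
  refine ANCTD_le_expect (fun C₁ hC₁ => ?_) fun C₁ hC₁ D₁ hD₁ hne hclash => ?_
  · rw [← consistent_disjSum_iff_leftSample hT hC₁ hC₂]
    exact hT _ (disjSum_mem_freeComb.2 ⟨hC₁, hC₂⟩)
  · rw [← consistent_disjSum_iff_leftSample hT hC₁ hC₂,
      ← consistent_disjSum_iff_leftSample hT hD₁ hC₂] at hclash
    exact hN _ (disjSum_mem_freeComb.2 ⟨hC₁, hC₂⟩) _ (disjSum_mem_freeComb.2 ⟨hD₁, hC₂⟩)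
      (by simpa using hne) hclash

lemma ANCTD_le_expect_rightSample (hT : IsTeacher (FreeComb 𝒞₁ 𝒞₂) T)
    (hN : NonClashing (FreeComb 𝒞₁ 𝒞₂) T) {C₁ : Finset X₁} (hC₁ : C₁ ∈ 𝒞₁) :
    ANCTD 𝒞₂ ≤ 𝔼 C₂ ∈ 𝒞₂, (#(rightSample (T (C₁.disjSum C₂))) : ℝ) := by
  refine ANCTD_le_expect (fun C₂ hC₂ => ?_) fun C₂ hC₂ D₂ hD₂ hne hclash => ?_
  · rw [← consistent_disjSum_iff_rightSample hT hC₁ hC₂]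
    exact hT _ (disjSum_mem_freeComb.2 ⟨hC₁, hC₂⟩)
  · rw [← consistent_disjSum_iff_rightSample hT hC₁ hC₂,
      ← consistent_disjSum_iff_rightSample hT hC₁ hD₂] at hclash
    exact hN _ (disjSum_mem_freeComb.2 ⟨hC₁, hC₂⟩) _ (disjSum_mem_freeComb.2 ⟨hC₁, hD₂⟩)
      (by simpa using hne) hclash

lemma le_ANCTD_freeComb (h₁ : 𝒞₁.Nonempty) (h₂ : 𝒞₂.Nonempty) :
    ANCTD 𝒞₁ + ANCTD 𝒞₂ ≤ ANCTD (FreeComb 𝒞₁ 𝒞₂) := by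
  refine le_ANCTD fun T hT hN => ?_
  calc ANCTD 𝒞₁ + ANCTD 𝒞₂ = 𝔼 _C₂ ∈ 𝒞₂, ANCTD 𝒞₁ + 𝔼 _C₁ ∈ 𝒞₁, ANCTD 𝒞₂ := by
        rw [expect_const h₂, expect_const h₁]
    _ ≤ 𝔼 C₂ ∈ 𝒞₂, 𝔼 C₁ ∈ 𝒞₁, (#(leftSample (T (C₁.disjSum C₂))) : ℝ) +
          𝔼 C₁ ∈ 𝒞₁, 𝔼 C₂ ∈ 𝒞₂, (#(rightSample (T (C₁.disjSum C₂))) : ℝ) :=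
        add_le_add (expect_le_expect fun _ hC₂ => ANCTD_le_expect_leftSample hT hN hC₂)
          (expect_le_expect fun _ hC₁ => ANCTD_le_expect_rightSample hT hN hC₁)
    _ = 𝔼 C ∈ FreeComb 𝒞₁ 𝒞₂, (#(T C) : ℝ) := by
        simp_rw [expect_freeComb, expect_comm 𝒞₂, ← expect_add_distrib, ← Nat.cast_add,
          card_leftSample_add_card_rightSample]

end FreeComb

theorem ANCTD_freeComb_general
    (𝒞₁ : Finset (Finset X₁)) (𝒞₂ : Finset (Finset X₂))
    (h₁ : 𝒞₁.Nonempty) (h₂ : 𝒞₂.Nonempty) :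
    ANCTD (FreeComb 𝒞₁ 𝒞₂) = ANCTD 𝒞₁ + ANCTD 𝒞₂ :=
  (ANCTD_freeComb_le h₁ h₂).antisymm (le_ANCTD_freeComb h₁ h₂)

/-- additivity of ANCTD under free combination. -/
theorem ANCTD_freeComb [Fintype X₁] [Fintype X₂]
    (𝒞₁ : Finset (Finset X₁)) (𝒞₂ : Finset (Finset X₂))
    (h₁ : 𝒞₁.Nonempty) (h₂ : 𝒞₂.Nonempty) :
    ANCTD (FreeComb 𝒞₁ 𝒞₂) = ANCTD 𝒞₁ + ANCTD 𝒞₂ :=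
  ANCTD_freeComb_general 𝒞₁ 𝒞₂ h₁ h₂
end
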